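/- Let J₁ = diag(I_p, −I_q), let Z = diag(iα I_{p'+q'}, iβ I_{p−p'}, iγ I_{q−q'}) be a block-diagonal purely imaginary scalar-block matrix, and let X(b) be the block matrix with off-diagonal blocks b and −J₂ b* J₁ (zero diagonal blocks). If b has nonzero entries only in prescribed rows, the trace form tr([Z, X(b)]·X(ib)) equals −2(α−β)tr(b₁₁ b₁₁*) − 2(γ−α)tr(b₁₂ b₁₂*), where b₁₁, b₁₂ are the corresponding sub-blocks of b. In particular if γ > α > β this is strictly negative for b ≠ 0. -/
import Mathlib


open Matrix

lemma my_trace_fromBlocks {m n : Type*} [Fintype m] [Fintype n]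
    (A : Matrix m m ℂ) (B : Matrix m n ℂ) (C : Matrix n m ℂ) (D : Matrix n n ℂ) :
    (fromBlocks A B C D).trace = A.trace + D.trace := by
  simp [Matrix.trace, Fintype.sum_sum_type, fromBlocks, Matrix.diag]

lemma my_fromBlocks_sub {l m n o : Type*} (A A' : Matrix n l ℂ) (B B' : Matrix n m ℂ)
    (C C' : Matrix o l ℂ) (D D' : Matrix o m ℂ) :
    fromBlocks A B C D - fromBlocks A' B' C' D' =
      fromBlocks (A - A') (B - B') (C - C') (D - D') := by
  ext (i|i) (j|j) <;> simp [fromBlocks]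

lemma my_trace_AAH {m n : Type*} [Fintype m] [Fintype n] (A : Matrix m n ℂ) :
    (A * Aᴴ).trace = ((∑ i, ∑ j, Complex.normSq (A i j) : ℝ) : ℂ) := by
  push_cast
  simp [Matrix.trace, Matrix.diag, Matrix.mul_apply, Matrix.conjTranspose_apply,
    Complex.mul_conj]

lemma my_sum_normSq_nonneg {m n : Type*} [Fintype m] [Fintype n] (A : Matrix m n ℂ) :
    0 ≤ ∑ i, ∑ j, Complex.normSq (A i j) :=
  Finset.sum_nonneg fun _ _ => Finset.sum_nonneg fun _ _ => Complex.normSq_nonneg _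

lemma my_sum_normSq_pos {m n : Type*} [Fintype m] [Fintype n] (A : Matrix m n ℂ)
    (hA : A ≠ 0) : 0 < ∑ i, ∑ j, Complex.normSq (A i j) := by
  obtain ⟨i, j, hij⟩ : ∃ i j, A i j ≠ 0 := by
    by_contra h
    push_neg at h
    exact hA (by ext i j; simp [h])
  refine Finset.sum_pos' (fun i _ => Finset.sum_nonneg fun j _ => Complex.normSq_nonneg _)
    ⟨i, Finset.mem_univ _, Finset.sum_pos'
      (fun j _ => Complex.normSq_nonneg _)
      ⟨j, Finset.mem_univ _, Complex.normSq_pos.mpr hij⟩⟩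

/-- With `Z = diag(iα, iβ, iγ)` (scalar blocks) and `X(b)` the off-diagonal block matrix
built from `b = [[b₁₁, b₁₂],[0,0]]`, one has
`tr([Z,X(b)]·X(ib)) = −2(α−β) tr(b₁₁b₁₁*) − 2(γ−α) tr(b₁₂b₁₂*)`;
in particular if `γ > α > β` this is strictly negative for `b ≠ 0`. -/
theorem stmt_12 (p' q' p₂ q₂ : ℕ) (α β γ : ℝ)
    (J₁ : Matrix (Fin p' ⊕ Fin q') (Fin p' ⊕ Fin q') ℂ)
    (hJ₁ : J₁ = fromBlocks 1 0 0 (-1))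
    (J₂ : Matrix (Fin p₂ ⊕ Fin q₂) (Fin p₂ ⊕ Fin q₂) ℂ)
    (hJ₂ : J₂ = fromBlocks 1 0 0 (-1))
    (Z : Matrix ((Fin p' ⊕ Fin q') ⊕ (Fin p₂ ⊕ Fin q₂))
        ((Fin p' ⊕ Fin q') ⊕ (Fin p₂ ⊕ Fin q₂)) ℂ)
    (hZ : Z = fromBlocks ((Complex.I * (α : ℂ)) • 1) 0 0
        (fromBlocks ((Complex.I * (β : ℂ)) • 1) 0 0 ((Complex.I * (γ : ℂ)) • 1)))
    (b₁₁ : Matrix (Fin p') (Fin p₂) ℂ) (b₁₂ : Matrix (Fin p') (Fin q₂) ℂ)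
    (b : Matrix (Fin p' ⊕ Fin q') (Fin p₂ ⊕ Fin q₂) ℂ)
    (hb : b = fromBlocks b₁₁ b₁₂ 0 0)
    (Xmap : Matrix (Fin p' ⊕ Fin q') (Fin p₂ ⊕ Fin q₂) ℂ →
      Matrix ((Fin p' ⊕ Fin q') ⊕ (Fin p₂ ⊕ Fin q₂))
        ((Fin p' ⊕ Fin q') ⊕ (Fin p₂ ⊕ Fin q₂)) ℂ)
    (hX : ∀ b', Xmap b' = fromBlocks 0 b' (-(J₂ * b'ᴴ * J₁)) 0) :
    ((Z * Xmap b - Xmap b * Z) * Xmap (Complex.I • b)).trace =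
      -2 * ((α : ℂ) - (β : ℂ)) * (b₁₁ * b₁₁ᴴ).trace
        - 2 * ((γ : ℂ) - (α : ℂ)) * (b₁₂ * b₁₂ᴴ).trace ∧
    (γ > α → α > β → b ≠ 0 →
      (((Z * Xmap b - Xmap b * Z) * Xmap (Complex.I • b)).trace).re < 0) := by
  have heq : ((Z * Xmap b - Xmap b * Z) * Xmap (Complex.I • b)).trace =
      -2 * ((α : ℂ) - (β : ℂ)) * (b₁₁ * b₁₁ᴴ).trace
        - 2 * ((γ : ℂ) - (α : ℂ)) * (b₁₂ * b₁₂ᴴ).trace := by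
    rw [hX, hX, hJ₁, hJ₂, hZ, hb]
    simp only [fromBlocks_conjTranspose, conjTranspose_zero,
      conjTranspose_smul, fromBlocks_multiply, fromBlocks_smul, fromBlocks_neg,
      my_fromBlocks_sub, Matrix.mul_smul, Matrix.smul_mul, Matrix.mul_one, Matrix.one_mul,
      Matrix.mul_zero, Matrix.zero_mul, Matrix.neg_mul, Matrix.mul_neg,
      my_trace_fromBlocks, trace_smul, trace_sub, trace_neg,
      add_zero, zero_add, smul_zero, zero_sub, sub_zero, neg_zero, neg_neg,
      smul_smul, smul_neg, Complex.star_def, RingHom.map_mul, Complex.conj_I,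
      Complex.conj_ofReal, smul_eq_mul, Matrix.sub_mul, Matrix.mul_sub, trace_zero,
      trace_add, smul_sub, smul_add]
    rw [Matrix.trace_mul_comm b₁₁ᴴ, Matrix.trace_mul_comm b₁₂ᴴ]
    ring_nf
    rw [Complex.I_sq]
    ring
  refine ⟨heq, fun hγα hαβ hbne => ?_⟩
  have hsplit : b₁₁ ≠ 0 ∨ b₁₂ ≠ 0 := by
    by_contra h
    push_neg at h
    exact hbne (by rw [hb, h.1, h.2]; ext (i|i) (j|j) <;> simp [fromBlocks])
  rw [heq, my_trace_AAH, my_trace_AAH]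
  set s₁ := ∑ i, ∑ j, Complex.normSq (b₁₁ i j) with hs₁
  set s₂ := ∑ i, ∑ j, Complex.normSq (b₁₂ i j) with hs₂
  have hcast : (-2 * ((α : ℂ) - (β : ℂ)) * ((s₁ : ℝ) : ℂ)
      - 2 * ((γ : ℂ) - (α : ℂ)) * ((s₂ : ℝ) : ℂ))
      = ((-2 * (α - β) * s₁ - 2 * (γ - α) * s₂ : ℝ) : ℂ) := by
    push_cast; ring
  rw [hcast, Complex.ofReal_re]
  have h1 : 0 ≤ s₁ := my_sum_normSq_nonneg b₁₁
  have h2 : 0 ≤ s₂ := my_sum_normSq_nonneg b₁₂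
  rcases hsplit with h | h
  · have := my_sum_normSq_pos b₁₁ h
    nlinarith
  · have := my_sum_normSq_pos b₁₂ h
    nlinarith
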